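/- arXiv:1101.4761 — 2 statements merged into one kernel-verified Lean document; each statement's English description precedes it below -/
import Mathlib

section
/- Let N ≥ 1, let δ be real, let k = −1, and let Γ: ℝ → ℝ be continuous. Let C be the N×N real tridiagonal matrix with all diagonal entries −(1+k) = 0, all superdiagonal entries 1, and all subdiagonal entries k = −1, and let Ω^δ ∈ ℝ^N be defined by Ω₁ = −Γ(δ), Ωᵢ = 0 for 2 ≤ i ≤ N−1, and Ω_N = Γ(δ). Let x: ℝ → ℝ^N be a differentiable solution of ẋ = Ω^δ + CΓ(x), and define E(x) = Σ_{i=1}^N ( ∫₀^{xᵢ} Γ(y) dy − Γ(δ)·xᵢ ). Then E(x(t)) is constant in t. -/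
/-!
With `k = -1` the matrix `C` is skew-symmetric, and for every `k` the frequency vector is
`Ω^δ = -C (Γ(δ) 𝟙)`, so the system reads `ẋ = C v` with `v = Γ(x) - Γ(δ) 𝟙`. Since
`∂E/∂xᵢ = Γ(xᵢ) - Γ(δ)`, the derivative of `E` along a solution is `v ⬝ C v = 0`.
-/

open Matrix

/-- The Lyapunov-type functional `E(x) = Σᵢ (∫₀^{xᵢ} Γ(y) dy − Γ(δ)·xᵢ)`. -/
noncomputable def lyapunovE (N : ℕ) (Γ : ℝ → ℝ) (δ : ℝ) (v : Fin N → ℝ) : ℝ :=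
  ∑ i, ((∫ y in (0:ℝ)..(v i), Γ y) - Γ δ * v i)

theorem Matrix.dotProduct_mulVec_self_eq_zero {n R : Type*} [Fintype n] [CommRing R]
    [IsAddTorsionFree R] {A : Matrix n n R} (hA : Aᵀ = -A) (v : n → R) :
    v ⬝ᵥ (A *ᵥ v) = 0 := by
  rw [← self_eq_neg]
  calc v ⬝ᵥ (A *ᵥ v) = (Aᵀ *ᵥ v) ⬝ᵥ v := by
        rw [dotProduct_mulVec, ← vecMul_transpose, transpose_transpose]
    _ = -(v ⬝ᵥ (A *ᵥ v)) := by rw [hA, neg_mulVec, neg_dotProduct, dotProduct_comm]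

theorem hasDerivAt_lyapunovE_comp {N : ℕ} {Γ : ℝ → ℝ} (δ : ℝ) (hΓ : Continuous Γ)
    {x : ℝ → Fin N → ℝ} {x' : Fin N → ℝ} {t : ℝ}
    (hx : ∀ i, HasDerivAt (fun s => x s i) (x' i) t) :
    HasDerivAt (fun s => lyapunovE N Γ δ (x s)) ((fun i => Γ (x t i) - Γ δ) ⬝ᵥ x') t := by
  unfold lyapunovE dotProduct
  refine HasDerivAt.fun_sum fun i _ => ?_
  have hprim : HasDerivAt (fun u => ∫ y in (0:ℝ)..u, Γ y) (Γ (x t i)) (x t i) :=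
    intervalIntegral.integral_hasDerivAt_right (hΓ.intervalIntegrable _ _)
      (hΓ.stronglyMeasurableAtFilter _ _) hΓ.continuousAt
  convert (hprim.comp t (hx i)).sub ((hx i).const_mul (Γ δ)) using 1
  · rfl
  · exact sub_mul _ _ _

theorem lyapunovE_eq_of_transpose_eq_neg {N : ℕ} {Γ : ℝ → ℝ} {δ : ℝ} (hΓ : Continuous Γ)
    {A : Matrix (Fin N) (Fin N) ℝ} (hA : Aᵀ = -A) {x : ℝ → Fin N → ℝ}
    (hx : ∀ t i, HasDerivAt (fun s => x s i) ((A *ᵥ fun j => Γ (x t j) - Γ δ) i) t)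
    (t₁ t₂ : ℝ) : lyapunovE N Γ δ (x t₁) = lyapunovE N Γ δ (x t₂) := by
  have hE : ∀ t, HasDerivAt (fun s => lyapunovE N Γ δ (x s)) 0 t := fun t => by
    simpa only [dotProduct_mulVec_self_eq_zero hA] using
      hasDerivAt_lyapunovE_comp δ hΓ (hx t)
  exact is_const_of_deriv_eq_zero (fun t => (hE t).differentiableAt) (fun t => (hE t).deriv)
    t₁ t₂

def couplingMatrix (N : ℕ) (k : ℝ) : Matrix (Fin N) (Fin N) ℝ :=
  Matrix.of fun i j =>
    if (i : ℕ) = (j : ℕ) then -(1 + k)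
    else if (j : ℕ) = (i : ℕ) + 1 then 1
    else if (i : ℕ) = (j : ℕ) + 1 then k else 0

theorem couplingMatrix_neg_one_transpose (N : ℕ) :
    (couplingMatrix N (-1))ᵀ = -couplingMatrix N (-1) := by
  ext i j
  rw [transpose_apply, neg_apply]
  simp only [couplingMatrix, of_apply]
  split_ifs <;> first | omega | norm_num

open Finset in
theorem sum_range_tridiagonal {R : Type*} [AddCommMonoid R] {N i : ℕ} (hi : i < N) (a b c : R) :
    ∑ j ∈ range N, (if i = j then a else if j = i + 1 then b else if i = j + 1 then c else 0) =
      a + (if i + 1 < N then b else 0) + (if i = 0 then 0 else c) := by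
  have hsplit : ∀ j, (if i = j then a else if j = i + 1 then b else if i = j + 1 then c else 0) =
      (if i = j then a else 0) + (if i + 1 = j then b else 0) + (if i = j + 1 then c else 0) := by
    intro j
    split_ifs <;> first | omega | simp
  rw [sum_congr rfl fun j _ => hsplit j, sum_add_distrib, sum_add_distrib, sum_ite_eq, sum_ite_eq,
    if_pos (mem_range.2 hi)]
  rcases i with _ | m
  · simp
  · simp [mem_range, (Nat.lt_succ_self m).trans hi]

theorem couplingMatrix_mulVec_const_neg (N : ℕ) (k a : ℝ) :
    couplingMatrix N k *ᵥ (fun _ => -a) =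
      fun i : Fin N =>
        (if (i : ℕ) = 0 then k * a else 0) + (if (i : ℕ) = N - 1 then a else 0) := by
  funext i
  simp only [mulVec, dotProduct, couplingMatrix, of_apply, ← Finset.sum_mul]
  rw [Fin.sum_univ_eq_sum_range (fun j => if (i : ℕ) = j then -(1 + k)
      else if j = (i : ℕ) + 1 then 1 else if (i : ℕ) = j + 1 then k else 0),
    sum_range_tridiagonal i.isLt]
  have hi := i.isLt
  split_ifs <;> first | omega | ring

theorem energy_conserved_general (N : ℕ) (k δ : ℝ) (hk : k = -1) (Γ : ℝ → ℝ)
    (hΓ : Continuous Γ)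
    (C : Matrix (Fin N) (Fin N) ℝ)
    (hC : ∀ i j : Fin N, C i j =
      if (i : ℕ) = (j : ℕ) then -(1 + k)
      else if (j : ℕ) = (i : ℕ) + 1 then 1
      else if (i : ℕ) = (j : ℕ) + 1 then k else 0)
    (Ω : Fin N → ℝ)
    (hΩ : ∀ i : Fin N, Ω i =
      (if (i : ℕ) = 0 then k * Γ δ else 0) + (if (i : ℕ) = N - 1 then Γ δ else 0))
    (x : ℝ → Fin N → ℝ)
    (hx : ∀ (t : ℝ) (i : Fin N),
      HasDerivAt (fun s => x s i) (Ω i + (C *ᵥ fun j => Γ (x t j)) i) t) :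
    ∀ t₁ t₂ : ℝ, lyapunovE N Γ δ (x t₁) = lyapunovE N Γ δ (x t₂) := by
  subst hk
  have hC' : C = couplingMatrix N (-1) := Matrix.ext hC
  have hΩ' : Ω = C *ᵥ fun _ => -Γ δ := by
    rw [hC', couplingMatrix_mulVec_const_neg]
    exact funext hΩ
  refine lyapunovE_eq_of_transpose_eq_neg hΓ (hC' ▸ couplingMatrix_neg_one_transpose N)
    fun t i => ?_
  convert hx t i using 1
  rw [hΩ', ← Pi.add_apply, ← mulVec_add]
  congr 2
  funext j
  rw [Pi.add_apply, neg_add_eq_sub]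

/-- For `k = −1`, the Lyapunov functional `E` is constant along
any solution of the phase-difference system `ẋ = Ω^δ + CΓ(x)`. -/
theorem energy_conserved (N : ℕ) (hN : 1 ≤ N) (k δ : ℝ) (hk : k = -1) (Γ : ℝ → ℝ)
    (hΓ : Continuous Γ)
    (C : Matrix (Fin N) (Fin N) ℝ)
    (hC : ∀ i j : Fin N, C i j =
      if (i : ℕ) = (j : ℕ) then -(1 + k)
      else if (j : ℕ) = (i : ℕ) + 1 then 1
      else if (i : ℕ) = (j : ℕ) + 1 then k else 0)
    (Ω : Fin N → ℝ)
    (hΩ : ∀ i : Fin N, Ω i =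
      (if (i : ℕ) = 0 then k * Γ δ else 0) + (if (i : ℕ) = N - 1 then Γ δ else 0))
    (x : ℝ → Fin N → ℝ)
    (hx : ∀ (t : ℝ) (i : Fin N),
      HasDerivAt (fun s => x s i) (Ω i + (C *ᵥ fun j => Γ (x t j)) i) t) :
    ∀ t₁ t₂ : ℝ, lyapunovE N Γ δ (x t₁) = lyapunovE N Γ δ (x t₂) :=
  energy_conserved_general N k δ hk Γ hΓ C hC Ω hΩ x hx
end

section
/- Let N ≥ 1, let k > −1 and δ be real, and let Γ: ℝ → ℝ be continuous. Let C be the N×N real tridiagonal matrix with all diagonal entries −(1+k), all superdiagonal entries 1, and all subdiagonal entries k, let Ω^δ ∈ ℝ^N be defined by Ω₁ = kΓ(δ), Ωᵢ = 0 for 2 ≤ i ≤ N−1, and Ω_N = Γ(δ), and define E(x) = Σ_{i=1}^N ( ∫₀^{xᵢ} Γ(y) dy − Γ(δ)·xᵢ ). If x: ℝ → ℝ^N is a differentiable solution of ẋ = Ω^δ + CΓ(x) and at time t there exists an index i with Γ(xᵢ(t)) ≠ Γ(δ), then d/dt E(x(t)) < 0. -/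
/-!
With `g := Γ(x(t)) − Γ(δ)·𝟙`, the chain rule gives `dE/dt = g ⬝ (Ω^δ + C Γ(x))`. Since
`C (Γ(δ)·𝟙) = −Ω^δ`, this is the quadratic form `g ⬝ C g = −(1 + k) (Σ gᵢ² − Σ gᵢ gᵢ₊₁)`, and
`2 (Σ gᵢ² − Σ gᵢ gᵢ₊₁) = g₁² + g_N² + Σ (gᵢ − gᵢ₊₁)²` vanishes only for `g = 0`.
-/

open Matrix

open Finset

def tridiagonal (N : ℕ) (a b c : ℝ) : Matrix (Fin N) (Fin N) ℝ :=
  Matrix.of fun i j =>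
    if (i : ℕ) = (j : ℕ) then a
    else if (j : ℕ) = (i : ℕ) + 1 then b
    else if (i : ℕ) = (j : ℕ) + 1 then c else 0

theorem sum_sum_ite_val_eq_succ {α : Type*} [AddCommMonoid α] {M : ℕ}
    (f : Fin (M + 1) → Fin (M + 1) → α) :
    ∑ i : Fin (M + 1), ∑ j : Fin (M + 1), (if (j : ℕ) = (i : ℕ) + 1 then f i j else 0) =
      ∑ i : Fin M, f i.castSucc i.succ := by
  rw [Fin.sum_univ_castSucc, Fintype.sum_eq_zero _ fun j => if_neg (by simp; omega), add_zero]
  refine Fintype.sum_congr _ _ fun i => ?_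
  rw [Fintype.sum_eq_single i.succ fun j hj => if_neg fun h => hj (Fin.ext (by simpa using h))]
  simp

theorem dotProduct_tridiagonal_mulVec {M : ℕ} (a b c : ℝ) (u v : Fin (M + 1) → ℝ) :
    u ⬝ᵥ tridiagonal (M + 1) a b c *ᵥ v =
      a * ∑ i, u i * v i + b * ∑ i : Fin M, u i.castSucc * v i.succ
        + c * ∑ i : Fin M, u i.succ * v i.castSucc := by
  have hsplit : ∀ i j : Fin (M + 1), u i * (tridiagonal (M + 1) a b c i j * v j) =
      (if i = j then a * (u i * v j) else 0)
        + (if (j : ℕ) = (i : ℕ) + 1 then b * (u i * v j) else 0)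
        + (if (i : ℕ) = (j : ℕ) + 1 then c * (u i * v j) else 0) := by
    intro i j
    simp only [tridiagonal, of_apply, Fin.ext_iff]
    split_ifs <;> first | omega | ring
  have hsub := sum_sum_ite_val_eq_succ fun j i => c * (u i * v j)
  rw [sum_comm] at hsub
  simp only [dotProduct, mulVec, mul_sum, hsplit, sum_add_distrib, sum_ite_eq, mem_univ,
    if_true, sum_sum_ite_val_eq_succ fun i j => b * (u i * v j), hsub]

theorem dotProduct_tridiagonal_mulVec_self {M : ℕ} (a b c : ℝ) (g : Fin (M + 1) → ℝ) :
    g ⬝ᵥ tridiagonal (M + 1) a b c *ᵥ g =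
      a * ∑ i, g i ^ 2 + (b + c) * ∑ i : Fin M, g i.castSucc * g i.succ := by
  simp only [dotProduct_tridiagonal_mulVec, sq, mul_comm (g (Fin.succ _))]
  ring

theorem two_mul_sum_sq_sub_sum_mul_succ {M : ℕ} (g : Fin (M + 1) → ℝ) :
    2 * (∑ i, g i ^ 2 - ∑ i : Fin M, g i.castSucc * g i.succ) =
      g 0 ^ 2 + g (Fin.last M) ^ 2 + ∑ i : Fin M, (g i.castSucc - g i.succ) ^ 2 := by
  have hcast := Fin.sum_univ_castSucc fun i => g i ^ 2
  have hsucc := Fin.sum_univ_succ fun i => g i ^ 2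
  have hexpand : ∑ i : Fin M, (g i.castSucc - g i.succ) ^ 2 = ∑ i : Fin M, g i.castSucc ^ 2
      - 2 * ∑ i : Fin M, g i.castSucc * g i.succ + ∑ i : Fin M, g i.succ ^ 2 := by
    simp only [mul_sum, ← sum_sub_distrib, ← sum_add_distrib]
    exact sum_congr rfl fun i _ => by ring
  linarith

theorem eq_zero_of_sum_sq_eq_sum_mul_succ {M : ℕ} {g : Fin (M + 1) → ℝ}
    (h : ∑ i, g i ^ 2 = ∑ i : Fin M, g i.castSucc * g i.succ) : g = 0 := by
  have hsum := two_mul_sum_sq_sub_sum_mul_succ g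
  rw [h, sub_self, mul_zero] at hsum
  obtain ⟨hg0, hdiff⟩ := (add_eq_zero_iff_of_nonneg (by positivity)
    (sum_nonneg fun i _ => sq_nonneg _)).1 hsum.symm
  have hstep (i : Fin M) : g i.castSucc = g i.succ :=
    sub_eq_zero.1 (pow_eq_zero_iff two_ne_zero |>.1 <|
      (sum_eq_zero_iff_of_nonneg fun i _ => sq_nonneg _).1 hdiff i (mem_univ i))
  funext i
  induction i using Fin.induction with
  | zero => exact pow_eq_zero_iff two_ne_zero |>.1 ((add_eq_zero_iff_of_nonneg (sq_nonneg _)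
      (sq_nonneg _)).1 hg0).1
  | succ i ih => rw [← hstep i, ih]; rfl

theorem sum_mul_succ_lt_sum_sq {M : ℕ} {g : Fin (M + 1) → ℝ} (hg : g ≠ 0) :
    ∑ i : Fin M, g i.castSucc * g i.succ < ∑ i, g i ^ 2 := by
  refine lt_of_le_of_ne ?_ fun h => hg (eq_zero_of_sum_sq_eq_sum_mul_succ h.symm)
  have hdiff : 0 ≤ ∑ i : Fin M, (g i.castSucc - g i.succ) ^ 2 := sum_nonneg fun i _ => sq_nonneg _
  nlinarith [two_mul_sum_sq_sub_sum_mul_succ g, sq_nonneg (g 0), sq_nonneg (g (Fin.last M))]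

theorem dotProduct_tridiagonal_mulVec_const_add {M : ℕ} (k γ : ℝ) (u Ω : Fin (M + 1) → ℝ)
    (hΩ : ∀ i : Fin (M + 1), Ω i =
      (if (i : ℕ) = 0 then k * γ else 0) + (if (i : ℕ) = M + 1 - 1 then γ else 0)) :
    u ⬝ᵥ Ω + u ⬝ᵥ tridiagonal (M + 1) (-(1 + k)) 1 k *ᵥ (fun _ => γ) = 0 := by
  have hΩ' : Ω = fun i => (if i = 0 then k * γ else 0) + (if i = Fin.last M then γ else 0) := by
    funext i
    simp only [hΩ, Fin.ext_iff, Fin.val_zero, Fin.val_last, Nat.add_sub_cancel]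
  have hΩu : u ⬝ᵥ Ω = k * γ * u 0 + γ * u (Fin.last M) := by
    simp only [hΩ', dotProduct, mul_add, sum_add_distrib, mul_ite, mul_zero, sum_ite_eq',
      mem_univ, if_true]
    ring
  rw [hΩu, dotProduct_tridiagonal_mulVec]
  simp only [← sum_mul]
  linear_combination -γ * Fin.sum_univ_castSucc u - k * γ * Fin.sum_univ_succ u

theorem hasDerivAt_lyapunovE {N : ℕ} {Γ : ℝ → ℝ} (hΓ : Continuous Γ) (δ : ℝ)
    {x : ℝ → Fin N → ℝ} {x' : Fin N → ℝ} {t : ℝ}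
    (hx : ∀ i, HasDerivAt (fun s => x s i) (x' i) t) :
    HasDerivAt (fun s => lyapunovE N Γ δ (x s)) ((fun i => Γ (x t i) - Γ δ) ⬝ᵥ x') t := by
  have hterm : ∀ i, HasDerivAt (fun s => (∫ y in (0 : ℝ)..x s i, Γ y) - Γ δ * x s i)
      ((Γ (x t i) - Γ δ) * x' i) t := fun i => by
    rw [sub_mul]
    exact ((hΓ.integral_hasStrictDerivAt 0 (x t i)).hasDerivAt.comp t (hx i)).sub
      ((hx i).const_mul (Γ δ))
  simpa only [lyapunovE, dotProduct] using HasDerivAt.fun_sum fun i _ => hterm i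

theorem energy_strictly_decreasing_general (N : ℕ) (k δ : ℝ) (hk : -1 < k)
    (Γ : ℝ → ℝ) (hΓ : Continuous Γ)
    (C : Matrix (Fin N) (Fin N) ℝ)
    (hC : ∀ i j : Fin N, C i j =
      if (i : ℕ) = (j : ℕ) then -(1 + k)
      else if (j : ℕ) = (i : ℕ) + 1 then 1
      else if (i : ℕ) = (j : ℕ) + 1 then k else 0)
    (Ω : Fin N → ℝ)
    (hΩ : ∀ i : Fin N, Ω i =
      (if (i : ℕ) = 0 then k * Γ δ else 0) + (if (i : ℕ) = N - 1 then Γ δ else 0))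
    (x : ℝ → Fin N → ℝ)
    (hx : ∀ (t : ℝ) (i : Fin N),
      HasDerivAt (fun s => x s i) (Ω i + (C *ᵥ fun j => Γ (x t j)) i) t)
    (t : ℝ) (i : Fin N) (hi : Γ (x t i) ≠ Γ δ) :
    deriv (fun s => lyapunovE N Γ δ (x s)) t < 0 := by
  obtain ⟨M, rfl⟩ : ∃ M, N = M + 1 := Nat.exists_eq_add_one.2 i.pos
  set g : Fin (M + 1) → ℝ := fun j => Γ (x t j) - Γ δ
  have hg : g ≠ 0 := fun h => hi (sub_eq_zero.1 (congrFun h i))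
  have hΓx : (fun j => Γ (x t j)) = g + fun _ => Γ δ := by
    funext j
    simp [g]
  obtain rfl : C = tridiagonal (M + 1) (-(1 + k)) 1 k := Matrix.ext hC
  have hE := hasDerivAt_lyapunovE hΓ δ (x' := Ω + _ *ᵥ fun j => Γ (x t j)) (hx t)
  have hequil := dotProduct_tridiagonal_mulVec_const_add k (Γ δ) g Ω hΩ
  have hderiv : deriv (fun s => lyapunovE (M + 1) Γ δ (x s)) t =
      g ⬝ᵥ tridiagonal (M + 1) (-(1 + k)) 1 k *ᵥ g := by
    rw [hE.deriv, hΓx, mulVec_add, dotProduct_add, dotProduct_add]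
    linarith
  rw [hderiv, dotProduct_tridiagonal_mulVec_self]
  have hdissipation := mul_pos (neg_lt_iff_pos_add'.1 hk) (sub_pos.2 (sum_mul_succ_lt_sum_sq hg))
  linarith

/-- For `k > −1`, the Lyapunov functional `E` strictly decreases
along a solution of `ẋ = Ω^δ + CΓ(x)` at every time `t` at which some
component satisfies `Γ(xᵢ(t)) ≠ Γ(δ)`. -/
theorem energy_strictly_decreasing (N : ℕ) (hN : 1 ≤ N) (k δ : ℝ) (hk : -1 < k)
    (Γ : ℝ → ℝ) (hΓ : Continuous Γ)
    (C : Matrix (Fin N) (Fin N) ℝ)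
    (hC : ∀ i j : Fin N, C i j =
      if (i : ℕ) = (j : ℕ) then -(1 + k)
      else if (j : ℕ) = (i : ℕ) + 1 then 1
      else if (i : ℕ) = (j : ℕ) + 1 then k else 0)
    (Ω : Fin N → ℝ)
    (hΩ : ∀ i : Fin N, Ω i =
      (if (i : ℕ) = 0 then k * Γ δ else 0) + (if (i : ℕ) = N - 1 then Γ δ else 0))
    (x : ℝ → Fin N → ℝ)
    (hx : ∀ (t : ℝ) (i : Fin N),
      HasDerivAt (fun s => x s i) (Ω i + (C *ᵥ fun j => Γ (x t j)) i) t)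
    (t : ℝ) (i : Fin N) (hi : Γ (x t i) ≠ Γ δ) :
    deriv (fun s => lyapunovE N Γ δ (x s)) t < 0 :=
  energy_strictly_decreasing_general N k δ hk Γ hΓ C hC Ω hΩ x hx t i hi
end
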